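/- arXiv:2309.15834 — 5 statements merged into one kernel-verified Lean document; each statement's English description precedes it below -/
import Mathlib

section
/- (LeFloch–Ma identity.) For every smooth function φ on {(t,x) ∈ ℝ × ℝ³ : t > 0} and every point (t,x) with t > 0, writing r = |x|, one has −∂_t²φ + Δ_xφ = ((r² − t²)/t²)·∂_t²φ − (2/t²)·Σ_{i=1}^3 x^i ∂_t(Ω_{0i}φ) + t⁻²·Σ_{i=1}^3 Ω_{0i}(Ω_{0i}φ) + t⁻³·Σ_{i=1}^3 x^i Ω_{0i}φ − t⁻¹(3 + r²/t²)·∂_tφ. -/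
open Topology


noncomputable section

/-- Point of `ℝ × ℝ³`. -/
abbrev Pt := ℝ × (Fin 3 → ℝ)

/-- Time derivative `∂_t`. -/
def dt (f : Pt → ℝ) : Pt → ℝ := fun p => fderiv ℝ f p (1, 0)

/-- Spatial derivative `∂_i`. -/
def dx (i : Fin 3) (f : Pt → ℝ) : Pt → ℝ := fun p => fderiv ℝ f p (0, Pi.single i 1)

/-- Boost vector fields `Ω_{0i} = t∂_i + x_i∂_t`. -/
def Om0 (i : Fin 3) (f : Pt → ℝ) : Pt → ℝ := fun p => p.1 * dx i f p + p.2 i * dt f p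

/-- `r = |x|` (Euclidean length of the spatial part). -/
def rad (p : Pt) : ℝ := Real.sqrt (∑ i, (p.2 i) ^ 2)

/-- LeFloch–Ma identity: for smooth `φ` on `{t > 0}` and `t > 0`, with `r = |x|`,
`−∂_t²φ + Δ_xφ = ((r²−t²)/t²)∂_t²φ − (2/t²)Σ x^i∂_t(Ω_{0i}φ) + t⁻²ΣΩ_{0i}(Ω_{0i}φ)
  + t⁻³Σ x^iΩ_{0i}φ − t⁻¹(3 + r²/t²)∂_tφ`. -/
theorem lefloch_ma_identity
    (φ : Pt → ℝ) (hφ : ContDiffOn ℝ (⊤ : ℕ∞) φ {p : Pt | 0 < p.1})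
    (p : Pt) (hp : 0 < p.1) :
    -dt (dt φ) p + ∑ i, dx i (dx i φ) p =
      ((rad p ^ 2 - p.1 ^ 2) / p.1 ^ 2) * dt (dt φ) p
        - (2 / p.1 ^ 2) * ∑ i, p.2 i * dt (Om0 i φ) p
        + p.1 ^ (-2 : ℤ) * ∑ i, Om0 i (Om0 i φ) p
        + p.1 ^ (-3 : ℤ) * ∑ i, p.2 i * Om0 i φ p
        - p.1⁻¹ * (3 + rad p ^ 2 / p.1 ^ 2) * dt φ p := by
  classical
  have ht : p.1 ≠ 0 := ne_of_gt hp
  have hU : IsOpen {q : Pt | 0 < q.1} := isOpen_lt continuous_const continuous_fst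
  set g : Pt → (Pt →L[ℝ] ℝ) := fderiv ℝ φ with hgdef
  have hev : ∀ᶠ q in 𝓝 p, HasFDerivAt φ (g q) q := by
    filter_upwards [hU.mem_nhds hp] with q hq
    exact ((hφ.contDiffAt (hU.mem_nhds hq)).differentiableAt (by simp)).hasFDerivAt
  have hφp : ContDiffAt ℝ (⊤ : ℕ∞) φ p := hφ.contDiffAt (hU.mem_nhds hp)
  have hgC : ContDiffAt ℝ 1 g p := hφp.fderiv_right (WithTop.coe_le_coe.mpr le_top)
  set H : Pt →L[ℝ] Pt →L[ℝ] ℝ := fderiv ℝ g p with hHdef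
  have hH : HasFDerivAt g H p := (hgC.differentiableAt one_ne_zero).hasFDerivAt
  have hsymm : ∀ v w : Pt, H v w = H w v := fun v w =>
    second_derivative_symmetric_of_eventually hev hH v w
  -- derivatives of q ↦ g q v
  have hgv : ∀ v : Pt, HasFDerivAt (fun q => g q v) (H.flip v) p := by
    intro v
    have h := hH.clm_apply (hasFDerivAt_const v p)
    refine h.congr_fderiv ?_
    ext w <;> simp
  -- notation
  set et : Pt := ((1 : ℝ), 0) with hetdef
  have hdtφ : dt φ p = g p et := rfl
  have hdxφ : ∀ i, dx i φ p = g p (0, Pi.single i 1) := fun i => rfl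
  have hdt2 : dt (dt φ) p = H et et := by
    show fderiv ℝ (fun q => g q et) p et = _
    rw [(hgv et).fderiv]
    rfl
  have hdxx : ∀ i, dx i (dx i φ) p = H (0, Pi.single i 1) (0, Pi.single i 1) := by
    intro i
    show fderiv ℝ (fun q => g q (0, Pi.single i 1)) p (0, Pi.single i 1) = _
    rw [(hgv _).fderiv]
    rfl
  -- derivative of Om0 i φ
  have h2i : ∀ i : Fin 3, HasFDerivAt (fun q : Pt => q.2 i)
      ((ContinuousLinearMap.proj i).comp (ContinuousLinearMap.snd ℝ ℝ (Fin 3 → ℝ))) p :=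
    fun i => ((ContinuousLinearMap.proj i).comp
      (ContinuousLinearMap.snd ℝ ℝ (Fin 3 → ℝ))).hasFDerivAt
  have hOmDeriv : ∀ i : Fin 3, HasFDerivAt (Om0 i φ)
      ((p.1 • H.flip (0, Pi.single i 1)
          + g p (0, Pi.single i 1) • ContinuousLinearMap.fst ℝ ℝ (Fin 3 → ℝ))
        + (p.2 i • H.flip et
          + g p et • ((ContinuousLinearMap.proj i).comp
              (ContinuousLinearMap.snd ℝ ℝ (Fin 3 → ℝ))))) p := by
    intro i
    exact (hasFDerivAt_fst.mul (hgv (0, Pi.single i 1))).add ((h2i i).mul (hgv et))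
  have hOmdt : ∀ i, dt (Om0 i φ) p
      = g p (0, Pi.single i 1) + p.1 * H et (0, Pi.single i 1) + p.2 i * H et et := by
    intro i
    show fderiv ℝ (Om0 i φ) p et = _
    rw [(hOmDeriv i).fderiv]
    simp [hetdef]
    ring
  have hOmdx : ∀ i, dx i (Om0 i φ) p
      = p.1 * H (0, Pi.single i 1) (0, Pi.single i 1)
        + g p et + p.2 i * H et (0, Pi.single i 1) := by
    intro i
    show fderiv ℝ (Om0 i φ) p (0, Pi.single i 1) = _
    rw [(hOmDeriv i).fderiv]
    rw [← hsymm (0, Pi.single i 1) et]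
    simp [hetdef]
    ring
  have hOm2 : ∀ i, Om0 i (Om0 i φ) p
      = p.1 * (p.1 * H (0, Pi.single i 1) (0, Pi.single i 1)
            + g p et + p.2 i * H et (0, Pi.single i 1))
        + p.2 i * (g p (0, Pi.single i 1) + p.1 * H et (0, Pi.single i 1)
            + p.2 i * H et et) := by
    intro i
    show p.1 * dx i (Om0 i φ) p + p.2 i * dt (Om0 i φ) p = _
    rw [hOmdx i, hOmdt i]
  have hOmφ : ∀ i, Om0 i φ p = p.1 * g p (0, Pi.single i 1) + p.2 i * g p et := fun i => rfl
  have hr : rad p ^ 2 = ∑ i, p.2 i ^ 2 := Real.sq_sqrt (by positivity)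
  have hz2 : p.1 ^ (-2 : ℤ) = (p.1 ^ 2)⁻¹ := by
    rw [zpow_neg]; norm_cast
  have hz3 : p.1 ^ (-3 : ℤ) = (p.1 ^ 3)⁻¹ := by
    rw [zpow_neg]; norm_cast
  rw [hz2, hz3, hr, hdt2, hdtφ]
  simp only [Fin.sum_univ_three, hdxx, hOmdt, hOm2, hOmφ]
  field_simp
  ring
end
end

section
/- (Propagation of the Lorenz gauge condition.) Let A_μ : ℝ⁴ → ℝ (μ = 0,…,3) and φ : ℝ⁴ → ℂ be smooth and satisfy the reduced massive Maxwell–Klein–Gordon system: −□A_μ = Im(φ·conj(D_μφ)) for each μ, and −□φ + φ = 2i·A^μ∂_μφ − A^μA_μ·φ, where □ = m^{μν}∂_μ∂_ν = −∂_t² + Δ_x, A^μ = m^{μν}A_ν. Then λ := ∂^μA_μ = m^{μν}∂_νA_μ satisfies the wave equation □λ = |φ|²·λ on ℝ⁴. -/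
noncomputable section

/-- Point of `ℝ⁴`. -/
abbrev V4 := Fin 4 → ℝ

/-- Partial derivative `∂_μ` of a real-valued function. -/
def pdR (μ : Fin 4) (f : V4 → ℝ) : V4 → ℝ := fun x => fderiv ℝ f x (Pi.single μ 1)

/-- Partial derivative `∂_μ` of a complex-valued function. -/
def pdC (μ : Fin 4) (f : V4 → ℂ) : V4 → ℂ := fun x => fderiv ℝ f x (Pi.single μ 1)

/-- The diagonal entries of the Minkowski metric `m = diag(−1,1,1,1)`. -/
def mSign (μ : Fin 4) : ℝ := if μ = 0 then -1 else 1

/-- Covariant derivative `D_μφ = ∂_μφ + iA_μφ`. -/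
def Dc (A : Fin 4 → V4 → ℝ) (μ : Fin 4) (φ : V4 → ℂ) : V4 → ℂ :=
  fun x => pdC μ φ x + Complex.I * (A μ x) * φ x

/-- The flat wave operator `□ = m^{μν}∂_μ∂_ν = −∂_t² + Δ_x` on real functions. -/
def boxR (f : V4 → ℝ) : V4 → ℝ := fun x => ∑ μ, mSign μ * pdR μ (pdR μ f) x

/-- The flat wave operator `□ = m^{μν}∂_μ∂_ν = −∂_t² + Δ_x` on complex functions. -/
def boxC (f : V4 → ℂ) : V4 → ℂ := fun x => ∑ μ, (mSign μ : ℂ) * pdC μ (pdC μ f) x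

section Helpers

variable {F G : Type*} [NormedAddCommGroup F] [NormedSpace ℝ F]
  [NormedAddCommGroup G] [NormedSpace ℝ G]

/-- Partial derivative, generic codomain. -/
def pd (μ : Fin 4) (f : V4 → F) : V4 → F := fun x => fderiv ℝ f x (Pi.single μ 1)

lemma pdR_eq (μ : Fin 4) (f : V4 → ℝ) : pdR μ f = pd μ f := rfl
lemma pdC_eq (μ : Fin 4) (f : V4 → ℂ) : pdC μ f = pd μ f := rfl

lemma contDiff_pd {f : V4 → F} (hf : ContDiff ℝ (⊤ : ℕ∞) f) (μ : Fin 4) :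
    ContDiff ℝ (⊤ : ℕ∞) (pd μ f) := by
  have h1 : ContDiff ℝ (⊤ : ℕ∞) (fderiv ℝ f) := hf.fderiv_right (by simp)
  exact (ContinuousLinearMap.apply ℝ F (Pi.single μ 1)).contDiff.comp h1

lemma pd_add {f g : V4 → F} (hf : Differentiable ℝ f) (hg : Differentiable ℝ g) (μ : Fin 4) :
    pd μ (fun y => f y + g y) = fun x => pd μ f x + pd μ g x := by
  funext x
  simp only [pd, fderiv_fun_add (hf x) (hg x), ContinuousLinearMap.add_apply]

lemma pd_clm (L : F →L[ℝ] G) {f : V4 → F} (hf : Differentiable ℝ f) (μ : Fin 4) :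
    pd μ (fun y => L (f y)) = fun x => L (pd μ f x) := by
  funext x
  have h2 : HasFDerivAt (fun y => L (f y)) (L.comp (fderiv ℝ f x)) x :=
    (L.hasFDerivAt (x := f x)).comp x (hf x).hasFDerivAt
  simp only [pd, h2.fderiv, ContinuousLinearMap.comp_apply]

lemma pd_sum {ι : Type*} (s : Finset ι) (f : ι → V4 → F)
    (hf : ∀ i, Differentiable ℝ (f i)) (μ : Fin 4) :
    pd μ (fun y => ∑ i ∈ s, f i y) = fun x => ∑ i ∈ s, pd μ (f i) x := by
  funext x
  simp only [pd, fderiv_fun_sum (fun i _ => (hf i x)), ContinuousLinearMap.sum_apply]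

lemma pd_const_mul {𝔸 : Type*} [NormedCommRing 𝔸] [NormedAlgebra ℝ 𝔸]
    (c : 𝔸) {f : V4 → 𝔸} (hf : Differentiable ℝ f) (μ : Fin 4) :
    pd μ (fun y => c * f y) = fun x => c * pd μ f x := by
  funext x
  simp only [pd, fderiv_const_mul (hf x) c, ContinuousLinearMap.smul_apply, smul_eq_mul]

lemma pd_mul {𝔸 : Type*} [NormedCommRing 𝔸] [NormedAlgebra ℝ 𝔸]
    {f g : V4 → 𝔸} (hf : Differentiable ℝ f) (hg : Differentiable ℝ g) (μ : Fin 4) :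
    pd μ (fun y => f y * g y) = fun x => f x * pd μ g x + g x * pd μ f x := by
  funext x
  simp only [pd, fderiv_fun_mul (hf x) (hg x), ContinuousLinearMap.add_apply,
    ContinuousLinearMap.smul_apply, smul_eq_mul]

lemma pd_neg (f : V4 → F) (μ : Fin 4) :
    pd μ (fun y => -(f y)) = fun x => -(pd μ f x) := by
  funext x
  simp only [pd, fderiv_fun_neg, ContinuousLinearMap.neg_apply]

lemma pd_ofReal {g : V4 → ℝ} (hg : Differentiable ℝ g) (μ : Fin 4) :
    pd μ (fun y => ((g y : ℝ) : ℂ)) = fun x => ((pd μ g x : ℝ) : ℂ) := by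
  simpa using pd_clm Complex.ofRealCLM hg μ

lemma pd_conj {f : V4 → ℂ} (hf : Differentiable ℝ f) (μ : Fin 4) :
    pd μ (fun y => (starRingEnd ℂ) (f y)) = fun x => (starRingEnd ℂ) (pd μ f x) := by
  simpa using pd_clm (Complex.conjCLE.toContinuousLinearMap) hf μ

lemma pd_im {f : V4 → ℂ} (hf : Differentiable ℝ f) (μ : Fin 4) :
    pd μ (fun y => (f y).im) = fun x => (pd μ f x).im := by
  simpa using pd_clm Complex.imCLM hf μ

lemma pd_comm {f : V4 → F} (hf : ContDiff ℝ (⊤ : ℕ∞) f) (μ ν : Fin 4) :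
    pd μ (pd ν f) = pd ν (pd μ f) := by
  have hd : Differentiable ℝ f := hf.differentiable (by simp)
  have h1 : ContDiff ℝ (⊤ : ℕ∞) (fderiv ℝ f) := hf.fderiv_right (by simp)
  funext x
  have key : ∀ (v w : V4),
      fderiv ℝ (fun y => fderiv ℝ f y v) x w = fderiv ℝ (fderiv ℝ f) x w v := by
    intro v w
    have : (fun y => fderiv ℝ f y v) =
        (ContinuousLinearMap.apply ℝ F v) ∘ (fderiv ℝ f) := rfl
    rw [this, fderiv_comp x (ContinuousLinearMap.apply ℝ F v).differentiableAt
      (h1.differentiable (by simp) x)]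
    simp
  have hsymm := second_derivative_symmetric (f := f) (f' := fderiv ℝ f)
    (f'' := fderiv ℝ (fderiv ℝ f) x) (fun y => (hd y).hasFDerivAt)
    ((h1.differentiable (by simp) x).hasFDerivAt) (Pi.single ν 1) (Pi.single μ 1)
  show fderiv ℝ (fun y => fderiv ℝ f y (Pi.single ν 1)) x (Pi.single μ 1)
      = fderiv ℝ (fun y => fderiv ℝ f y (Pi.single μ 1)) x (Pi.single ν 1)
  rw [key, key, hsymm]

lemma mSign_zero : mSign 0 = -1 := rfl
lemma mSign_one : mSign 1 = 1 := rfl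
lemma mSign_two : mSign 2 = 1 := rfl
lemma mSign_three : mSign 3 = 1 := rfl

end Helpers

/-- propagation of the Lorenz gauge condition: if `(A,φ)` solves the reduced
massive Maxwell–Klein–Gordon system `−□A_μ = Im(φ·conj(D_μφ))`,
`−□φ + φ = 2i·A^μ∂_μφ − A^μA_μ·φ`, then `λ = ∂^μA_μ` satisfies `□λ = |φ|²·λ`. -/
theorem lorenz_gauge_propagation
    (A : Fin 4 → V4 → ℝ) (φ : V4 → ℂ)
    (hA : ∀ μ, ContDiff ℝ (⊤ : ℕ∞) (A μ)) (hφ : ContDiff ℝ (⊤ : ℕ∞) φ)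
    (hMaxwell : ∀ μ x, -boxR (A μ) x = (φ x * (starRingEnd ℂ) (Dc A μ φ x)).im)
    (hKG : ∀ x, -boxC φ x + φ x =
      2 * Complex.I * ∑ μ, ((mSign μ * A μ x : ℝ) : ℂ) * pdC μ φ x
        - ((∑ μ, mSign μ * A μ x * A μ x : ℝ) : ℂ) * φ x) :
    ∀ x, boxR (fun y => ∑ μ, mSign μ * pdR μ (A μ) y) x =
      Complex.normSq (φ x) * (∑ μ, mSign μ * pdR μ (A μ) x) := by
  intro x
  have hφd : Differentiable ℝ φ := hφ.differentiable (by simp)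
  have hAd : ∀ μ, Differentiable ℝ (A μ) := fun μ => (hA μ).differentiable (by simp)
  have hpdφ : ∀ μ, ContDiff ℝ (⊤ : ℕ∞) (pd μ φ) := fun μ => contDiff_pd hφ μ
  have hpdφd : ∀ μ, Differentiable ℝ (pd μ φ) := fun μ => (hpdφ μ).differentiable (by simp)
  have hpdA : ∀ μ ν, Differentiable ℝ (pd ν (A μ)) :=
    fun μ ν => (contDiff_pd (hA μ) ν).differentiable (by simp)
  have hpdAc : ∀ μ ν, ContDiff ℝ (⊤ : ℕ∞) (pd ν (A μ)) := fun μ ν => contDiff_pd (hA μ) ν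
  -- Step A
  have stepA : boxR (fun y => ∑ μ, mSign μ * pdR μ (A μ) y) x
      = ∑ μ, mSign μ * pd μ (fun y => boxR (A μ) y) x := by
    have hl1 : ∀ ν : Fin 4, pd ν (fun y => ∑ μ, mSign μ * pd μ (A μ) y)
        = fun y => ∑ μ, mSign μ * pd ν (pd μ (A μ)) y := by
      intro ν
      rw [pd_sum Finset.univ (fun μ y => mSign μ * pd μ (A μ) y)
        (fun μ => (hpdA μ μ).const_mul _) ν]
      funext y
      exact Finset.sum_congr rfl fun μ _ => by
        rw [pd_const_mul (mSign μ : ℝ) (hpdA μ μ) ν]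
    have e1 : boxR (fun y => ∑ μ, mSign μ * pdR μ (A μ) y) x
        = ∑ ν, mSign ν * pd ν (pd ν (fun y => ∑ μ, mSign μ * pd μ (A μ) y)) x := rfl
    rw [e1]
    have e2 : ∀ ν : Fin 4, pd ν (pd ν (fun y => ∑ μ, mSign μ * pd μ (A μ) y)) x
        = ∑ μ, mSign μ * pd μ (pd ν (pd ν (A μ))) x := by
      intro ν
      rw [hl1 ν]
      rw [pd_sum Finset.univ (fun μ y => mSign μ * pd ν (pd μ (A μ)) y)
        (fun μ => ((contDiff_pd (hpdAc μ μ) ν).differentiable (by simp)).const_mul _) ν]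
      refine Finset.sum_congr rfl fun μ _ => ?_
      rw [pd_const_mul (mSign μ : ℝ) ((contDiff_pd (hpdAc μ μ) ν).differentiable (by simp)) ν,
        pd_comm (hA μ) ν μ, pd_comm (contDiff_pd (hA μ) ν) ν μ]
    simp only [e2]
    have e3 : ∀ μ : Fin 4, pd μ (fun y => boxR (A μ) y) x
        = ∑ ν, mSign ν * pd μ (pd ν (pd ν (A μ))) x := by
      intro μ
      have hb : (fun y => boxR (A μ) y) = fun y => ∑ ν, mSign ν * pd ν (pd ν (A μ)) y := rfl
      rw [hb, pd_sum Finset.univ (fun ν y => mSign ν * pd ν (pd ν (A μ)) y)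
        (fun ν => ((contDiff_pd (hpdAc μ ν) ν).differentiable (by simp)).const_mul _) μ]
      exact Finset.sum_congr rfl fun ν _ => by
        rw [pd_const_mul (mSign ν : ℝ) ((contDiff_pd (hpdAc μ ν) ν).differentiable (by simp)) μ]
    simp only [e3, Finset.mul_sum]
    rw [Finset.sum_comm]
    exact Finset.sum_congr rfl fun μ _ => Finset.sum_congr rfl fun ν _ => by ring
  rw [stepA]
  have hBoxA : ∀ μ : Fin 4, (fun y => boxR (A μ) y)
      = fun y => -((φ y * (starRingEnd ℂ) (Dc A μ φ y)).im) := by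
    intro μ; funext y; have h := hMaxwell μ y; linarith
  have hAC : ∀ μ, Differentiable ℝ (fun y => ((A μ y : ℝ) : ℂ)) :=
    fun μ => Complex.ofRealCLM.differentiable.comp (hAd μ)
  have hDcd : ∀ μ, Differentiable ℝ (Dc A μ φ) := by
    intro μ
    have h1 : Dc A μ φ = fun y => pd μ φ y + Complex.I * (((A μ y : ℝ) : ℂ) * φ y) := by
      funext y; simp only [Dc, pdC_eq]; ring
    rw [h1]
    exact (hpdφd μ).add (((hAC μ).mul hφd).const_mul _)
  have hconj : ∀ μ, Differentiable ℝ (fun y => (starRingEnd ℂ) (Dc A μ φ y)) := by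
    intro μ
    exact Complex.conjCLE.differentiable.comp (hDcd μ)
  have hpdDc : ∀ μ, pd μ (Dc A μ φ) = fun y =>
      pd μ (pd μ φ) y + Complex.I * (((A μ y : ℝ) : ℂ) * pd μ φ y + φ y * ((pd μ (A μ) y : ℝ) : ℂ)) := by
    intro μ
    have h1 : Dc A μ φ = fun y => pd μ φ y + Complex.I * (((A μ y : ℝ) : ℂ) * φ y) := by
      funext y; simp only [Dc, pdC_eq]; ring
    rw [h1]
    rw [pd_add (hpdφd μ) (((hAC μ).fun_mul hφd).const_mul _),
      pd_const_mul Complex.I ((hAC μ).fun_mul hφd),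
      pd_mul (hAC μ) hφd, pd_ofReal (hAd μ)]
  have key : ∀ μ : Fin 4, pd μ (fun y => boxR (A μ) y) x =
      -((φ x * (starRingEnd ℂ) (pd μ (pd μ φ) x
          + Complex.I * (((A μ x : ℝ) : ℂ) * pd μ φ x + φ x * ((pd μ (A μ) x : ℝ) : ℂ)))
        + (starRingEnd ℂ) (Dc A μ φ x) * pd μ φ x).im) := by
    intro μ
    rw [hBoxA μ, pd_neg, pd_im (hφd.fun_mul (hconj μ)), pd_mul hφd (hconj μ),
      pd_conj (hDcd μ), hpdDc μ]
  simp only [key]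
  have h := hKG x
  simp only [boxC, pdC_eq] at h
  have hre := congrArg Complex.re h
  have him := congrArg Complex.im h
  clear h
  simp only [Fin.sum_univ_four, mSign_zero, mSign_one, mSign_two, mSign_three, pdR_eq, Dc, pdC_eq,
    Complex.add_re, Complex.add_im, Complex.mul_re, Complex.mul_im, Complex.neg_re, Complex.neg_im,
    Complex.sub_re, Complex.sub_im, Complex.I_re, Complex.I_im, Complex.ofReal_re, Complex.ofReal_im,
    Complex.conj_re, Complex.conj_im, Complex.normSq_apply, Complex.ofReal_mul, Complex.ofReal_neg,
    Complex.ofReal_one, Complex.re_ofNat, Complex.im_ofNat, neg_mul, one_mul, neg_neg, mul_zero,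
    zero_mul, mul_one, zero_sub, sub_zero, zero_add, add_zero, mul_neg, neg_zero] at hre him ⊢
  linear_combination (φ x).im * hre - (φ x).re * him
end
end

section
/- (First-order covariant commutator.) Let A_μ : ℝ⁴ → ℝ (μ = 0,…,3) and φ : ℝ⁴ → ℂ be smooth, and let Z = Z^μ∂_μ be a smooth Minkowski-Killing vector field on ℝ⁴ (i.e. ∂_μZ_ν + ∂_νZ_μ = 0 where Z_μ = m_{μν}Z^ν). Then, with F_{μν} = ∂_μA_ν − ∂_νA_μ, one has the pointwise identity □_A(D_Zφ) − D_Z(□_Aφ) = Q(F,φ,Z), where Q(F,φ,Z) := 2i·Z^νF_{μν}·D^μφ + i·∂^μ(Z^νF_{μν})·φ. -/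
noncomputable section

/-- Covariant wave operator `□_Aφ = m^{μν}D_μ(D_νφ)`. -/
def boxA (A : Fin 4 → V4 → ℝ) (φ : V4 → ℂ) : V4 → ℂ :=
  fun x => ∑ μ, (mSign μ : ℂ) * Dc A μ (Dc A μ φ) x

/-- Curvature `F_{μν} = ∂_μA_ν − ∂_νA_μ`. -/
def Fcurv (A : Fin 4 → V4 → ℝ) (μ ν : Fin 4) : V4 → ℝ :=
  fun x => pdR μ (A ν) x - pdR ν (A μ) x

/-- `D_Zφ = Z^μD_μφ` for a vector field with components `Z^μ`. -/
def DZ (A : Fin 4 → V4 → ℝ) (Z : Fin 4 → V4 → ℝ) (φ : V4 → ℂ) : V4 → ℂ :=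
  fun x => ∑ μ, (Z μ x : ℂ) * Dc A μ φ x

/-- The trilinear form `Q(G,φ,Z) = 2i·Z^νG_{μν}·D^μφ + i·∂^μ(Z^νG_{μν})·φ`. -/
def Qform (A : Fin 4 → V4 → ℝ) (G : Fin 4 → Fin 4 → V4 → ℝ) (φ : V4 → ℂ)
    (Z : Fin 4 → V4 → ℝ) : V4 → ℂ :=
  fun x => 2 * Complex.I * ∑ μ, (mSign μ : ℂ) * ((∑ ν, Z ν x * G μ ν x : ℝ) : ℂ) * Dc A μ φ x
    + Complex.I * ((∑ μ, mSign μ * pdR μ (fun y => ∑ ν, Z ν y * G μ ν y) x : ℝ) : ℂ) * φ x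

/-- `Z` is a Minkowski-Killing vector field: `∂_μZ_ν + ∂_νZ_μ = 0` with `Z_μ = m_{μν}Z^ν`. -/
def IsKilling (Z : Fin 4 → V4 → ℝ) : Prop :=
  ∀ μ ν x, mSign ν * pdR μ (Z ν) x + mSign μ * pdR ν (Z μ) x = 0

-- generic partial derivative tools
section generic
variable {F : Type*} [NormedAddCommGroup F] [NormedSpace ℝ F]

lemma smooth_pd {f : V4 → F} (hf : ContDiff ℝ (⊤ : ℕ∞) f) (μ : Fin 4) :
    ContDiff ℝ (⊤ : ℕ∞) (fun x => fderiv ℝ f x (Pi.single μ 1)) := by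
  exact (ContinuousLinearMap.apply ℝ F (Pi.single μ 1)).contDiff.comp
    (hf.fderiv_right (by simp : ((⊤ : ℕ∞) : WithTop ℕ∞) + 1 ≤ ((⊤ : ℕ∞) : WithTop ℕ∞)))

lemma pd_swap {f : V4 → F} (hf : ContDiff ℝ (⊤ : ℕ∞) f) (μ ν : Fin 4) (x : V4) :
    fderiv ℝ (fun y => fderiv ℝ f y (Pi.single ν 1)) x (Pi.single μ 1)
      = fderiv ℝ (fun y => fderiv ℝ f y (Pi.single μ 1)) x (Pi.single ν 1) := by
  have hd : ContDiff ℝ (⊤ : ℕ∞) (fderiv ℝ f) := hf.fderiv_right (by simp)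
  have key : ∀ a b : Fin 4,
      fderiv ℝ (fun y => fderiv ℝ f y (Pi.single b 1)) x (Pi.single a 1)
        = fderiv ℝ (fderiv ℝ f) x (Pi.single a 1) (Pi.single b 1) := by
    intro a b
    set L := ContinuousLinearMap.apply ℝ F ((Pi.single b 1 : V4)) with hL
    have h1 : HasFDerivAt (⇑L ∘ fderiv ℝ f) (L.comp (fderiv ℝ (fderiv ℝ f) x)) x :=
      HasFDerivAt.comp x (L.hasFDerivAt (x := fderiv ℝ f x))
        ((hd.differentiable (by simp)) x).hasFDerivAt
    have h2 : (fun y => fderiv ℝ f y (Pi.single b 1)) = ⇑L ∘ fderiv ℝ f := rfl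
    rw [h2, h1.fderiv]; rfl
  rw [key, key]
  exact (hf.contDiffAt.isSymmSndFDerivAt (by simp only [minSmoothness_of_isRCLikeNormedField]; exact WithTop.coe_le_coe.mpr le_top)) _ _
end generic

-- differentiability shorthand
lemma diffAt {F : Type*} [NormedAddCommGroup F] [NormedSpace ℝ F] {f : V4 → F}
    (hf : ContDiff ℝ (⊤ : ℕ∞) f) (x : V4) : DifferentiableAt ℝ f x :=
  (hf.differentiable (by simp)) x

lemma smooth_pdR {f : V4 → ℝ} (hf : ContDiff ℝ (⊤ : ℕ∞) f) (μ : Fin 4) : ContDiff ℝ (⊤ : ℕ∞) (pdR μ f) :=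
  smooth_pd hf μ
lemma smooth_pdC {f : V4 → ℂ} (hf : ContDiff ℝ (⊤ : ℕ∞) f) (μ : Fin 4) : ContDiff ℝ (⊤ : ℕ∞) (pdC μ f) :=
  smooth_pd hf μ

lemma pdC_swap {f : V4 → ℂ} (hf : ContDiff ℝ (⊤ : ℕ∞) f) (μ ν : Fin 4) (x : V4) :
    pdC μ (pdC ν f) x = pdC ν (pdC μ f) x := pd_swap hf μ ν x
lemma pdR_swap {f : V4 → ℝ} (hf : ContDiff ℝ (⊤ : ℕ∞) f) (μ ν : Fin 4) (x : V4) :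
    pdR μ (pdR ν f) x = pdR ν (pdR μ f) x := pd_swap hf μ ν x

lemma pdC_add {f g : V4 → ℂ} (hf : ContDiff ℝ (⊤ : ℕ∞) f) (hg : ContDiff ℝ (⊤ : ℕ∞) g) (μ : Fin 4) (x : V4) :
    pdC μ (fun y => f y + g y) x = pdC μ f x + pdC μ g x := by
  unfold pdC; rw [fderiv_fun_add (diffAt hf x) (diffAt hg x)]; rfl

lemma pdC_mul {f g : V4 → ℂ} (hf : ContDiff ℝ (⊤ : ℕ∞) f) (hg : ContDiff ℝ (⊤ : ℕ∞) g) (μ : Fin 4) (x : V4) :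
    pdC μ (fun y => f y * g y) x = f x * pdC μ g x + g x * pdC μ f x := by
  unfold pdC; rw [fderiv_fun_mul (diffAt hf x) (diffAt hg x)]; rfl

lemma pdC_const_mul {f : V4 → ℂ} (hf : ContDiff ℝ (⊤ : ℕ∞) f) (c : ℂ) (μ : Fin 4) (x : V4) :
    pdC μ (fun y => c * f y) x = c * pdC μ f x := by
  unfold pdC; rw [fderiv_const_mul (diffAt hf x) c]; rfl

lemma pdC_sum {f : Fin 4 → V4 → ℂ} (hf : ∀ ν, ContDiff ℝ (⊤ : ℕ∞) (f ν)) (μ : Fin 4) (x : V4) :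
    pdC μ (fun y => ∑ ν, f ν y) x = ∑ ν, pdC μ (f ν) x := by
  unfold pdC; rw [fderiv_fun_sum (fun i _ => diffAt (hf i) x)]; simp

lemma pdC_ofReal {f : V4 → ℝ} (hf : ContDiff ℝ (⊤ : ℕ∞) f) (μ : Fin 4) (x : V4) :
    pdC μ (fun y => ((f y : ℝ) : ℂ)) x = ((pdR μ f x : ℝ) : ℂ) := by
  have h : HasFDerivAt (fun y => ((f y : ℝ) : ℂ))
      (Complex.ofRealCLM.comp (fderiv ℝ f x)) x :=
    Complex.ofRealCLM.hasFDerivAt.comp x (diffAt hf x).hasFDerivAt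
  unfold pdC pdR; rw [h.fderiv]; rfl

lemma pdR_mul {f g : V4 → ℝ} (hf : ContDiff ℝ (⊤ : ℕ∞) f) (hg : ContDiff ℝ (⊤ : ℕ∞) g) (μ : Fin 4) (x : V4) :
    pdR μ (fun y => f y * g y) x = f x * pdR μ g x + g x * pdR μ f x := by
  unfold pdR; rw [fderiv_fun_mul (diffAt hf x) (diffAt hg x)]; rfl

lemma pdR_const_mul {f : V4 → ℝ} (hf : ContDiff ℝ (⊤ : ℕ∞) f) (c : ℝ) (μ : Fin 4) (x : V4) :
    pdR μ (fun y => c * f y) x = c * pdR μ f x := by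
  unfold pdR; rw [fderiv_const_mul (diffAt hf x) c]; rfl

lemma pdR_sum {f : Fin 4 → V4 → ℝ} (hf : ∀ ν, ContDiff ℝ (⊤ : ℕ∞) (f ν)) (μ : Fin 4) (x : V4) :
    pdR μ (fun y => ∑ ν, f ν y) x = ∑ ν, pdR μ (f ν) x := by
  unfold pdR; rw [fderiv_fun_sum (fun i _ => diffAt (hf i) x)]; simp

lemma smooth_ofReal {f : V4 → ℝ} (hf : ContDiff ℝ (⊤ : ℕ∞) f) :
    ContDiff ℝ (⊤ : ℕ∞) (fun y => ((f y : ℝ) : ℂ)) := Complex.ofRealCLM.contDiff.comp hf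

lemma smooth_Dc {A : Fin 4 → V4 → ℝ} {φ : V4 → ℂ} (hA : ∀ μ, ContDiff ℝ (⊤ : ℕ∞) (A μ))
    (hφ : ContDiff ℝ (⊤ : ℕ∞) φ) (μ : Fin 4) : ContDiff ℝ (⊤ : ℕ∞) (Dc A μ φ) := by
  unfold Dc
  exact (smooth_pdC hφ μ).add ((contDiff_const.mul (smooth_ofReal (hA μ))).mul hφ)

section DcLemmas
variable {A : Fin 4 → V4 → ℝ} {f g : V4 → ℂ}

lemma Dc_add (hf : ContDiff ℝ (⊤ : ℕ∞) f) (hg : ContDiff ℝ (⊤ : ℕ∞) g) (μ : Fin 4) (x : V4) :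
    Dc A μ (fun y => f y + g y) x = Dc A μ f x + Dc A μ g x := by
  unfold Dc; rw [pdC_add hf hg]; ring

lemma Dc_sum {f : Fin 4 → V4 → ℂ} (hf : ∀ ν, ContDiff ℝ (⊤ : ℕ∞) (f ν)) (μ : Fin 4) (x : V4) :
    Dc A μ (fun y => ∑ ν, f ν y) x = ∑ ν, Dc A μ (f ν) x := by
  unfold Dc; rw [pdC_sum hf, Finset.mul_sum, ← Finset.sum_add_distrib]

lemma Dc_const_mul (hf : ContDiff ℝ (⊤ : ℕ∞) f) (c : ℂ) (μ : Fin 4) (x : V4) :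
    Dc A μ (fun y => c * f y) x = c * Dc A μ f x := by
  unfold Dc; rw [pdC_const_mul hf]; ring

lemma Dc_ofReal_mul {g : V4 → ℝ} (hg : ContDiff ℝ (⊤ : ℕ∞) g) (hf : ContDiff ℝ (⊤ : ℕ∞) f) (μ : Fin 4) (x : V4) :
    Dc A μ (fun y => (g y : ℂ) * f y) x = ((pdR μ g x : ℝ) : ℂ) * f x + (g x : ℂ) * Dc A μ f x := by
  unfold Dc; rw [pdC_mul (smooth_ofReal hg) hf, pdC_ofReal hg]; ring

lemma pdC_Dc (hA : ∀ μ, ContDiff ℝ (⊤ : ℕ∞) (A μ)) (hf : ContDiff ℝ (⊤ : ℕ∞) f) (ν μ : Fin 4) (x : V4) :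
    pdC μ (Dc A ν f) x = pdC μ (pdC ν f) x
      + Complex.I * (((pdR μ (A ν) x : ℝ) : ℂ) * f x + ((A ν x : ℝ) : ℂ) * pdC μ f x) := by
  have h0 : Dc A ν f = fun y => pdC ν f y + Complex.I * (((A ν y : ℝ) : ℂ) * f y) := by
    funext y; unfold Dc; ring
  rw [h0, pdC_add (smooth_pdC hf ν) (contDiff_const.mul ((smooth_ofReal (hA ν)).mul hf)),
     pdC_const_mul ((smooth_ofReal (hA ν)).mul hf) Complex.I,
     pdC_mul (smooth_ofReal (hA ν)) hf, pdC_ofReal (hA ν)]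
  ring

lemma Dc_comm (hA : ∀ μ, ContDiff ℝ (⊤ : ℕ∞) (A μ)) (hf : ContDiff ℝ (⊤ : ℕ∞) f) (μ ν : Fin 4) (x : V4) :
    Dc A μ (Dc A ν f) x = Dc A ν (Dc A μ f) x + Complex.I * ((Fcurv A μ ν x : ℝ) : ℂ) * f x := by
  show pdC μ (Dc A ν f) x + Complex.I * (A μ x) * (Dc A ν f x)
      = pdC ν (Dc A μ f) x + Complex.I * (A ν x) * (Dc A μ f x) + _
  rw [pdC_Dc hA hf ν μ x, pdC_Dc hA hf μ ν x, pdC_swap hf μ ν x]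
  unfold Dc Fcurv
  push_cast
  ring

lemma smooth_F (hA : ∀ μ, ContDiff ℝ (⊤ : ℕ∞) (A μ)) (μ ν : Fin 4) : ContDiff ℝ (⊤ : ℕ∞) (Fcurv A μ ν) := by
  unfold Fcurv; exact (smooth_pdR (hA ν) μ).sub (smooth_pdR (hA μ) ν)

lemma Dc_triple (hA : ∀ μ, ContDiff ℝ (⊤ : ℕ∞) (A μ)) (hφ : ContDiff ℝ (⊤ : ℕ∞) f) (μ ν : Fin 4) (x : V4) :
    Dc A μ (Dc A μ (Dc A ν f)) x = Dc A ν (Dc A μ (Dc A μ f)) x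
      + 2 * Complex.I * ((Fcurv A μ ν x : ℝ) : ℂ) * Dc A μ f x
      + Complex.I * ((pdR μ (Fcurv A μ ν) x : ℝ) : ℂ) * f x := by
  have h1 : Dc A μ (Dc A ν f)
      = fun y => Dc A ν (Dc A μ f) y + Complex.I * (((Fcurv A μ ν y : ℝ) : ℂ) * f y) := by
    funext y; rw [Dc_comm hA hφ μ ν y]; ring
  rw [h1, Dc_add (smooth_Dc hA (smooth_Dc hA hφ μ) ν)
        (contDiff_const.mul ((smooth_ofReal (smooth_F hA μ ν)).mul hφ)) μ x,
      Dc_comm hA (smooth_Dc hA hφ μ) μ ν x,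
      Dc_const_mul ((smooth_ofReal (smooth_F hA μ ν)).mul hφ) Complex.I μ x,
      Dc_ofReal_mul (smooth_F hA μ ν) hφ μ x]
  ring
end DcLemmas

-- Killing lemmas

lemma mSign_cases (μ : Fin 4) : mSign μ = 1 ∨ mSign μ = -1 := by
  unfold mSign; split <;> simp

lemma killing_anti {Z : Fin 4 → V4 → ℝ} (hZ : IsKilling Z) (μ ν : Fin 4) (x : V4) :
    mSign μ * pdR μ (Z ν) x = -(mSign ν * pdR ν (Z μ) x) := by
  have h := hZ μ ν x
  rcases mSign_cases μ with h1 | h1 <;> rcases mSign_cases ν with h2 | h2 <;>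
    rw [h1, h2] at h ⊢ <;> linarith

lemma killing_second {Z : Fin 4 → V4 → ℝ} (hZs : ∀ μ, ContDiff ℝ (⊤ : ℕ∞) (Z μ))
    (hZ : IsKilling Z) (a b c : Fin 4) (x : V4) : pdR a (pdR b (Z c)) x = 0 := by
  set t : Fin 4 → Fin 4 → Fin 4 → ℝ := fun p q r => mSign r * pdR p (pdR q (Z r)) x with ht
  have hanti : ∀ p q r, t p q r = -(t p r q) := by
    intro p q r
    have he : (fun y => mSign r * pdR q (Z r) y) = (fun y => (-1 : ℝ) * (mSign q * pdR r (Z q) y)) := by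
      funext y; have := hZ q r y; linarith
    have h1 : pdR p (fun y => mSign r * pdR q (Z r) y) x
        = -(pdR p (fun y => mSign q * pdR r (Z q) y) x) := by
      rw [he, pdR_const_mul (contDiff_const.mul (smooth_pdR (hZs q) r)) (-1)]; ring
    rw [pdR_const_mul (smooth_pdR (hZs r) q) (mSign r),
        pdR_const_mul (smooth_pdR (hZs q) r) (mSign q)] at h1
    simp only [ht]; linarith
  have hsym : ∀ p q r, t p q r = t q p r := by
    intro p q r; simp only [ht, pdR_swap (hZs r) p q x]
  have h0 : t a b c = -(t a b c) := by
    calc t a b c = -(t a c b) := hanti a b c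
    _ = -(t c a b) := by rw [hsym a c b]
    _ = t c b a := by rw [hanti c a b]; ring
    _ = t b c a := by rw [hsym c b a]
    _ = -(t b a c) := by rw [hanti b c a]
    _ = -(t a b c) := by rw [hsym b a c]
  have h1 : t a b c = 0 := by linarith
  simp only [ht] at h1
  rcases mSign_cases c with h2 | h2 <;> rw [h2] at h1 <;> linarith

/-- first-order covariant commutator:
`□_A(D_Zφ) − D_Z(□_Aφ) = Q(F,φ,Z)` for Killing `Z`. -/
theorem first_order_commutator
    (A : Fin 4 → V4 → ℝ) (φ : V4 → ℂ) (Z : Fin 4 → V4 → ℝ)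
    (hA : ∀ μ, ContDiff ℝ (⊤ : ℕ∞) (A μ)) (hφ : ContDiff ℝ (⊤ : ℕ∞) φ)
    (hZsmooth : ∀ μ, ContDiff ℝ (⊤ : ℕ∞) (Z μ)) (hZ : IsKilling Z) :
    ∀ x, boxA A (DZ A Z φ) x - DZ A Z (boxA A φ) x = Qform A (Fcurv A) φ Z x := by
  intro x
  have hψ : ∀ ν, ContDiff ℝ (⊤ : ℕ∞) (Dc A ν φ) := fun ν => smooth_Dc hA hφ ν
  have hψ2 : ∀ μ ν, ContDiff ℝ (⊤ : ℕ∞) (Dc A μ (Dc A ν φ)) := fun μ ν => smooth_Dc hA (hψ ν) μ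
  -- Step B : first covariant derivative of DZ φ
  have stepB : ∀ μ y, Dc A μ (DZ A Z φ) y
      = ∑ ν, (((pdR μ (Z ν) y : ℝ) : ℂ) * Dc A ν φ y
          + ((Z ν y : ℝ) : ℂ) * Dc A μ (Dc A ν φ) y) := by
    intro μ y
    have h1 : Dc A μ (DZ A Z φ) y
        = ∑ ν, Dc A μ (fun z => ((Z ν z : ℝ) : ℂ) * Dc A ν φ z) y :=
      Dc_sum (f := fun ν z => ((Z ν z : ℝ) : ℂ) * Dc A ν φ z)
        (fun ν => (smooth_ofReal (hZsmooth ν)).mul (hψ ν)) μ y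
    rw [h1]
    exact Finset.sum_congr rfl fun ν _ => Dc_ofReal_mul (hZsmooth ν) (hψ ν) μ y
  have stepBf : ∀ μ, Dc A μ (DZ A Z φ)
      = fun y => ∑ ν, (((pdR μ (Z ν) y : ℝ) : ℂ) * Dc A ν φ y
          + ((Z ν y : ℝ) : ℂ) * Dc A μ (Dc A ν φ) y) := fun μ => funext (stepB μ)
  -- Step C : second covariant derivative of DZ φ
  have stepC : ∀ μ, Dc A μ (Dc A μ (DZ A Z φ)) x
      = ∑ ν, (2 * ((pdR μ (Z ν) x : ℝ) : ℂ) * Dc A μ (Dc A ν φ) x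
          + ((Z ν x : ℝ) : ℂ) * Dc A μ (Dc A μ (Dc A ν φ)) x) := by
    intro μ
    rw [stepBf μ]
    have hsm : ∀ ν, ContDiff ℝ (⊤ : ℕ∞) (fun y => ((pdR μ (Z ν) y : ℝ) : ℂ) * Dc A ν φ y
        + ((Z ν y : ℝ) : ℂ) * Dc A μ (Dc A ν φ) y) := fun ν =>
      ((smooth_ofReal (smooth_pdR (hZsmooth ν) μ)).mul (hψ ν)).add
        ((smooth_ofReal (hZsmooth ν)).mul (hψ2 μ ν))
    have hterm : ∀ ν, Dc A μ (fun y => ((pdR μ (Z ν) y : ℝ) : ℂ) * Dc A ν φ y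
        + ((Z ν y : ℝ) : ℂ) * Dc A μ (Dc A ν φ) y) x
        = 2 * ((pdR μ (Z ν) x : ℝ) : ℂ) * Dc A μ (Dc A ν φ) x
          + ((Z ν x : ℝ) : ℂ) * Dc A μ (Dc A μ (Dc A ν φ)) x := by
      intro ν
      rw [Dc_add ((smooth_ofReal (smooth_pdR (hZsmooth ν) μ)).mul (hψ ν))
            ((smooth_ofReal (hZsmooth ν)).mul (hψ2 μ ν)) μ x,
          Dc_ofReal_mul (smooth_pdR (hZsmooth ν) μ) (hψ ν) μ x,
          Dc_ofReal_mul (hZsmooth ν) (hψ2 μ ν) μ x,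
          killing_second hZsmooth hZ μ μ ν x]
      push_cast
      ring
    refine (Dc_sum (f := fun ν y => ((pdR μ (Z ν) y : ℝ) : ℂ) * Dc A ν φ y
        + ((Z ν y : ℝ) : ℂ) * Dc A μ (Dc A ν φ) y) hsm μ x).trans ?_
    exact Finset.sum_congr rfl fun ν _ => hterm ν
  -- LHS first piece
  have hbox1 : boxA A (DZ A Z φ) x
      = ∑ μ, ∑ ν, (mSign μ : ℂ) * (2 * ((pdR μ (Z ν) x : ℝ) : ℂ) * Dc A μ (Dc A ν φ) x
          + ((Z ν x : ℝ) : ℂ) * Dc A μ (Dc A μ (Dc A ν φ)) x) := by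
    refine Finset.sum_congr rfl fun μ _ => ?_
    rw [stepC μ, Finset.mul_sum]
  -- LHS second piece
  have hDcbox : ∀ ν, Dc A ν (boxA A φ) x
      = ∑ μ, (mSign μ : ℂ) * Dc A ν (Dc A μ (Dc A μ φ)) x := by
    intro ν
    have h1 : Dc A ν (boxA A φ) x
        = ∑ μ, Dc A ν (fun y => (mSign μ : ℂ) * Dc A μ (Dc A μ φ) y) x :=
      Dc_sum (f := fun μ y => (mSign μ : ℂ) * Dc A μ (Dc A μ φ) y)
        (fun μ => contDiff_const.mul (hψ2 μ μ)) ν x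
    rw [h1]
    exact Finset.sum_congr rfl fun μ _ => Dc_const_mul (hψ2 μ μ) _ ν x
  have hD' : DZ A Z (boxA A φ) x
      = ∑ μ, ∑ ν, ((Z ν x : ℝ) : ℂ) * ((mSign μ : ℂ) * Dc A ν (Dc A μ (Dc A μ φ)) x) := by
    rw [Finset.sum_comm]
    refine Finset.sum_congr rfl fun ν _ => ?_
    show ((Z ν x : ℝ) : ℂ) * Dc A ν (boxA A φ) x = _
    rw [hDcbox ν, Finset.mul_sum]
  -- Qform expansion
  have hpd : ∀ μ, pdR μ (fun y => ∑ ν, Z ν y * Fcurv A μ ν y) x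
      = ∑ ν, (pdR μ (Z ν) x * Fcurv A μ ν x + Z ν x * pdR μ (Fcurv A μ ν) x) := by
    intro μ
    have h1 : pdR μ (fun y => ∑ ν, Z ν y * Fcurv A μ ν y) x
        = ∑ ν, pdR μ (fun y => Z ν y * Fcurv A μ ν y) x :=
      pdR_sum (f := fun ν y => Z ν y * Fcurv A μ ν y)
        (fun ν => (hZsmooth ν).mul (smooth_F hA μ ν)) μ x
    rw [h1]
    refine Finset.sum_congr rfl fun ν _ => ?_
    rw [pdR_mul (hZsmooth ν) (smooth_F hA μ ν) μ x]; ring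
  have h3 : Qform A (Fcurv A) φ Z x
      = ∑ μ, ∑ ν, (2 * Complex.I * (mSign μ : ℂ) * ((Z ν x : ℝ) : ℂ) * ((Fcurv A μ ν x : ℝ) : ℂ)
            * Dc A μ φ x
          + Complex.I * (mSign μ : ℂ) * (((pdR μ (Z ν) x : ℝ) : ℂ) * ((Fcurv A μ ν x : ℝ) : ℂ)
            + ((Z ν x : ℝ) : ℂ) * ((pdR μ (Fcurv A μ ν) x : ℝ) : ℂ)) * φ x) := by
    show 2 * Complex.I * ∑ μ, (mSign μ : ℂ) * ((∑ ν, Z ν x * Fcurv A μ ν x : ℝ) : ℂ) * Dc A μ φ x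
      + Complex.I * ((∑ μ, mSign μ * pdR μ (fun y => ∑ ν, Z ν y * Fcurv A μ ν y) x : ℝ) : ℂ) * φ x
      = _
    rw [show (∑ μ, mSign μ * pdR μ (fun y => ∑ ν, Z ν y * Fcurv A μ ν y) x)
        = ∑ μ, mSign μ * ∑ ν, (pdR μ (Z ν) x * Fcurv A μ ν x + Z ν x * pdR μ (Fcurv A μ ν) x)
        from Finset.sum_congr rfl fun μ _ => by rw [hpd μ]]
    push_cast
    simp only [Finset.mul_sum, Finset.sum_mul]
    rw [← Finset.sum_add_distrib]
    refine Finset.sum_congr rfl fun μ _ => ?_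
    rw [← Finset.sum_add_distrib]
    exact Finset.sum_congr rfl fun ν _ => by ring
  -- the Killing cancellation
  have hanti : ∀ a b : Fin 4, ((mSign b : ℂ) * ((pdR b (Z a) x : ℝ) : ℂ))
      = -((mSign a : ℂ) * ((pdR a (Z b) x : ℝ) : ℂ)) := by
    intro a b
    have h := killing_anti hZ b a x
    have h' := congrArg (Complex.ofReal) h
    push_cast at h'
    exact h'
  have key : ∑ μ, ∑ ν, (((mSign μ : ℂ) * ((pdR μ (Z ν) x : ℝ) : ℂ)) * Dc A μ (Dc A ν φ) x
      + ((mSign μ : ℂ) * ((pdR μ (Z ν) x : ℝ) : ℂ)) * Dc A ν (Dc A μ φ) x) = 0 := by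
    simp only [Finset.sum_add_distrib]
    have hT : (∑ μ, ∑ ν, ((mSign μ : ℂ) * ((pdR μ (Z ν) x : ℝ) : ℂ)) * Dc A ν (Dc A μ φ) x)
        = -(∑ μ, ∑ ν, ((mSign μ : ℂ) * ((pdR μ (Z ν) x : ℝ) : ℂ)) * Dc A μ (Dc A ν φ) x) := by
      rw [Finset.sum_comm]
      rw [show -(∑ μ, ∑ ν, ((mSign μ : ℂ) * ((pdR μ (Z ν) x : ℝ) : ℂ)) * Dc A μ (Dc A ν φ) x)
          = ∑ μ, ∑ ν, -(((mSign μ : ℂ) * ((pdR μ (Z ν) x : ℝ) : ℂ)) * Dc A μ (Dc A ν φ) x) by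
        simp [Finset.sum_neg_distrib]]
      refine Finset.sum_congr rfl fun a _ => Finset.sum_congr rfl fun b _ => ?_
      rw [hanti a b]; ring
    rw [hT]; ring
  -- final assembly
  calc boxA A (DZ A Z φ) x - DZ A Z (boxA A φ) x
      = ∑ μ, ∑ ν, ((mSign μ : ℂ) * (2 * ((pdR μ (Z ν) x : ℝ) : ℂ) * Dc A μ (Dc A ν φ) x
            + ((Z ν x : ℝ) : ℂ) * Dc A μ (Dc A μ (Dc A ν φ)) x)
          - ((Z ν x : ℝ) : ℂ) * ((mSign μ : ℂ) * Dc A ν (Dc A μ (Dc A μ φ)) x)) := by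
        rw [hbox1, hD', ← Finset.sum_sub_distrib]
        exact Finset.sum_congr rfl fun μ _ => (Finset.sum_sub_distrib _ _).symm
    _ = ∑ μ, ∑ ν, ((2 * Complex.I * (mSign μ : ℂ) * ((Z ν x : ℝ) : ℂ)
            * ((Fcurv A μ ν x : ℝ) : ℂ) * Dc A μ φ x
          + Complex.I * (mSign μ : ℂ) * (((pdR μ (Z ν) x : ℝ) : ℂ) * ((Fcurv A μ ν x : ℝ) : ℂ)
            + ((Z ν x : ℝ) : ℂ) * ((pdR μ (Fcurv A μ ν) x : ℝ) : ℂ)) * φ x)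
          + ((((mSign μ : ℂ) * ((pdR μ (Z ν) x : ℝ) : ℂ)) * Dc A μ (Dc A ν φ) x
            + ((mSign μ : ℂ) * ((pdR μ (Z ν) x : ℝ) : ℂ)) * Dc A ν (Dc A μ φ) x))) := by
        refine Finset.sum_congr rfl fun μ _ => Finset.sum_congr rfl fun ν _ => ?_
        rw [Dc_triple hA hφ μ ν x, Dc_comm hA hφ μ ν x]
        ring
    _ = Qform A (Fcurv A) φ Z x := by
        rw [h3]
        simp only [Finset.sum_add_distrib]
        have key2 := key
        simp only [Finset.sum_add_distrib] at key2
        linear_combination key2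
end
end

section
/- (Change of variables between the unit ball and the backward light cone.) Let t > 0 and x ∈ ℝ³ with |x| < t, and for η ∈ S² set R(η) = (t² − |x|²)/(2(t − ⟨x,η⟩)), where ⟨·,·⟩ is the Euclidean inner product (note 0 < R(η) < t). Then for every continuous P : ℝ³ → ℝ vanishing outside the closed unit ball, ∫_{|y| ≤ 1} P(y) dy = ∫_{S²} ∫_{0}^{R(η)} P( (x − Rη)/(t − R) ) · R²·(t − ⟨x,η⟩)/(R − t)⁴ dR dσ(η), where dy is Lebesgue measure on ℝ³ and σ is the standard surface measure on the unit sphere S² ⊆ ℝ³. -/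
/-!
Put `Ψ z := (x - z) / (t - ‖z‖)`, so that `Ψ (R • η)` is the point `(t - R, x - R • η)` of the
backward light ray from `(t, x)` in direction `η`, rescaled to time `1`. `Ψ` maps
`D = {z ≠ 0 | ‖x - z‖ < t - ‖z‖}` bijectively onto the unit ball minus the point `x / t`: for
`‖y‖ < 1` the function `u ↦ ‖x - u • y‖² - (t - u)²` is a concave quadratic, negative at `0` and
nonnegative at `t`, so it has exactly one zero `u < t`, and then `z = x - u • y`.
The change of variables formula, with `|det DΨ z| = (t‖z‖ - ⟪x, z⟫) / (‖z‖ (t - ‖z‖)⁴)`, followed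
by polar coordinates `z = R • η`, gives the right-hand side, because `R • η ∈ D` exactly when
`0 < R < R(η)`.
-/

noncomputable section

open MeasureTheory Metric

/-- Euclidean `ℝ³`. -/
abbrev E3 := EuclideanSpace ℝ (Fin 3)

/-- The surface measure `σ` on the unit sphere `S² ⊆ ℝ³` (total mass `4π`). -/
def sphMeas : Measure (sphere (0 : E3) 1) := (volume : Measure E3).toSphere

open Set
open scoped RealInnerProductSpace

namespace MeasureTheory

variable {E F : Type*} [NormedAddCommGroup E] [NormedSpace ℝ E] [MeasurableSpace E]
  [BorelSpace E] [FiniteDimensional ℝ E] [Nontrivial E] [NormedAddCommGroup F] [NormedSpace ℝ F]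

theorem closedBall_ae_eq_ball_sdiff_singleton (μ : Measure E) [μ.IsAddHaarMeasure]
    (c : E) (ρ : ℝ) (p : E) : closedBall c ρ =ᵐ[μ] (ball c ρ \ {p} : Set E) := by
  rw [← closedBall_sdiff_sphere]
  exact ((sdiff_null_ae_eq_self (measure_singleton _)).trans
    (sdiff_null_ae_eq_self (Measure.addHaar_sphere μ c ρ))).symm

theorem integral_eq_integral_toSphere_integral_Ioi (μ : Measure E) [μ.IsAddHaarMeasure]
    {f : E → F} (hf : Integrable f μ) :
    ∫ x, f x ∂μ = ∫ η, (∫ r in Ioi (0 : ℝ),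
      r ^ (Module.finrank ℝ E - 1) • f (r • (η : E))) ∂μ.toSphere := by
  have hmp := μ.measurePreserving_homeomorphUnitSphereProd
  have hemb := (homeomorphUnitSphereProd E).measurableEmbedding
  set g : sphere (0 : E) 1 × Ioi (0 : ℝ) → F := fun p => f ((p.2 : ℝ) • (p.1 : E))
  have hg : ∀ z : ({0}ᶜ : Set E), g (homeomorphUnitSphereProd E z) = f z := fun z => by
    simp [g, smul_smul, mul_inv_cancel₀ (norm_ne_zero_iff.2 z.2)]
  have hgint : Integrable g (μ.toSphere.prod (.volumeIoiPow (Module.finrank ℝ E - 1))) := by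
    rw [← hmp.integrable_comp_emb hemb]
    simpa only [Function.comp_def, hg] using
      (integrableOn_iff_comap_subtypeVal (measurableSet_singleton 0).compl).1 hf.integrableOn
  calc ∫ x, f x ∂μ = ∫ z : ({0}ᶜ : Set E), f z ∂(μ.comap (↑)) := by
        rw [integral_subtype_comap (measurableSet_singleton 0).compl, restrict_compl_singleton]
    _ = ∫ p, g p ∂(μ.toSphere.prod (.volumeIoiPow (Module.finrank ℝ E - 1))) := by
        rw [← hmp.integral_comp hemb g]
        simp only [hg]
    _ = _ := by
        rw [integral_prod g hgint]
        refine integral_congr_ae (.of_forall fun η => ?_)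
        simp only [Measure.volumeIoiPow, ENNReal.ofReal]
        rw [integral_withDensity_eq_integral_smul (measurable_subtype_coe.pow_const _).real_toNNReal,
          integral_subtype_comap measurableSet_Ioi
            (fun r : ℝ => (r ^ (Module.finrank ℝ E - 1)).toNNReal • f (r • (η : E)))]
        refine setIntegral_congr_fun measurableSet_Ioi fun r hr => ?_
        rw [NNReal.smul_def, Real.coe_toNNReal _ (pow_nonneg (le_of_lt hr) _)]

end MeasureTheory

theorem eq_of_quadratic_eq_zero_of_lt {a b c u₁ u₂ T : ℝ} (ha : a < 0)
    (h₁ : a * u₁ ^ 2 + b * u₁ + c = 0) (h₂ : a * u₂ ^ 2 + b * u₂ + c = 0)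
    (hu₁ : u₁ < T) (hu₂ : u₂ < T) (hT : 0 ≤ a * T ^ 2 + b * T + c) : u₁ = u₂ := by
  by_contra hne
  have hb : b = -(a * (u₁ + u₂)) := by
    have : (b + a * (u₁ + u₂)) * (u₁ - u₂) = 0 := by linear_combination h₁ - h₂
    linarith [(mul_eq_zero.1 this).resolve_right (sub_ne_zero.2 hne)]
  have hc : c = a * u₁ * u₂ := by linear_combination h₁ - u₁ * hb
  nlinarith [mul_neg_of_neg_of_pos ha (mul_pos (sub_pos.2 hu₁) (sub_pos.2 hu₂))]

section LightConeDomain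

variable {V : Type*} [NormedAddCommGroup V] {t : ℝ} {x z : V}

def lightConeDomain (t : ℝ) (x : V) : Set V := {z | z ≠ 0 ∧ ‖x - z‖ < t - ‖z‖}

theorem isOpen_lightConeDomain : IsOpen (lightConeDomain t x) :=
  isOpen_compl_singleton.inter
    (isOpen_lt (continuous_const.sub continuous_id).norm (continuous_const.sub continuous_norm))

theorem norm_pos_of_mem_lightConeDomain (hz : z ∈ lightConeDomain t x) : 0 < ‖z‖ :=
  norm_pos_iff.2 hz.1

theorem norm_lt_of_mem_lightConeDomain (hz : z ∈ lightConeDomain t x) : ‖z‖ < t := by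
  linarith [hz.2, norm_nonneg (x - z), norm_pos_of_mem_lightConeDomain hz]

end LightConeDomain

section LightConeMap

variable {V : Type*} [NormedAddCommGroup V] [NormedSpace ℝ V] {t : ℝ} {x z : V}

def lightConeMap (t : ℝ) (x z : V) : V := (t - ‖z‖)⁻¹ • (x - z)

theorem norm_lightConeMap_lt_one (hz : z ∈ lightConeDomain t x) :
    ‖lightConeMap t x z‖ < 1 := by
  have hu : 0 < t - ‖z‖ := sub_pos.2 (norm_lt_of_mem_lightConeDomain hz)
  rw [lightConeMap, norm_smul, Real.norm_eq_abs, abs_inv, abs_of_pos hu, inv_mul_lt_one₀ hu]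
  exact hz.2

theorem sub_smul_lightConeMap (hz : z ∈ lightConeDomain t x) :
    x - (t - ‖z‖) • lightConeMap t x z = z := by
  rw [lightConeMap, smul_smul, mul_inv_cancel₀ (sub_pos.2 (norm_lt_of_mem_lightConeDomain hz)).ne',
    one_smul, sub_sub_cancel]

end LightConeMap

section InnerProductSpace

variable {V : Type*} [NormedAddCommGroup V] [InnerProductSpace ℝ V] {t r : ℝ} {x y z η : V}

theorem hasFDerivAt_norm (hz : z ≠ 0) : HasFDerivAt (‖·‖) (‖z‖⁻¹ • innerSL ℝ z) z := by
  have h := (hasStrictFDerivAt_norm_sq z).hasFDerivAt.sqrt (pow_ne_zero 2 (norm_ne_zero_iff.2 hz))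
  simp only [Real.sqrt_sq (norm_nonneg _)] at h
  convert h using 1
  ext w
  simp [field]

def lightConeMapDeriv (t : ℝ) (x z : V) : V →L[ℝ] V :=
  (-(t - ‖z‖)⁻¹) • ContinuousLinearMap.id ℝ V +
    ((t - ‖z‖) ^ 2 * ‖z‖)⁻¹ • (innerSL ℝ z).smulRight (x - z)

theorem hasFDerivAt_lightConeMap (hz : z ≠ 0) (hzt : ‖z‖ ≠ t) :
    HasFDerivAt (lightConeMap t x) (lightConeMapDeriv t x z) z := by
  have hinv : HasFDerivAt (fun w : V => (t - ‖w‖)⁻¹)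
      ((-((t - ‖z‖) ^ 2)⁻¹) • -(‖z‖⁻¹ • innerSL ℝ z)) z :=
    (hasDerivAt_inv (sub_ne_zero.2 hzt.symm)).comp_hasFDerivAt z
      ((hasFDerivAt_norm hz).const_sub t)
  refine (hinv.smul ((hasFDerivAt_id z).const_sub x)).congr_fderiv ?_
  ext w
  simp [lightConeMapDeriv, smul_smul, mul_comm]

theorem norm_sub_smul_sq_sub_sq (t u : ℝ) (x y : V) :
    ‖x - u • y‖ ^ 2 - (t - u) ^ 2 =
      (‖y‖ ^ 2 - 1) * u ^ 2 + 2 * (t - ⟪x, y⟫) * u + (‖x‖ ^ 2 - t ^ 2) := by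
  rw [norm_sub_sq_real, real_inner_smul_right, norm_smul, Real.norm_eq_abs, mul_pow, sq_abs]
  ring

theorem eq_of_norm_sub_smul_eq (hy : ‖y‖ < 1) {u₁ u₂ : ℝ} (hu₁ : u₁ < t) (hu₂ : u₂ < t)
    (h₁ : ‖x - u₁ • y‖ = t - u₁) (h₂ : ‖x - u₂ • y‖ = t - u₂) : u₁ = u₂ := by
  have hroot : ∀ u, ‖x - u • y‖ = t - u →
      (‖y‖ ^ 2 - 1) * u ^ 2 + 2 * (t - ⟪x, y⟫) * u + (‖x‖ ^ 2 - t ^ 2) = 0 := fun u hu => by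
    rw [← norm_sub_smul_sq_sub_sq, hu, sub_self]
  refine eq_of_quadratic_eq_zero_of_lt (by nlinarith [norm_nonneg y]) (hroot u₁ h₁) (hroot u₂ h₂)
    hu₁ hu₂ ?_
  rw [← norm_sub_smul_sq_sub_sq, sub_self, zero_pow two_ne_zero, sub_zero]
  positivity

theorem exists_norm_sub_smul_eq (hx : ‖x‖ < t) (hy : x - t • y ≠ 0) :
    ∃ u ∈ Ioo 0 t, ‖x - u • y‖ = t - u := by
  have ht : 0 < t := (norm_nonneg x).trans_lt hx
  have hq : ContinuousOn (fun u : ℝ => ‖x - u • y‖ ^ 2 - (t - u) ^ 2) (Icc 0 t) := by fun_prop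
  have hq0 : ‖x - (0 : ℝ) • y‖ ^ 2 - (t - 0) ^ 2 < 0 := by
    rw [zero_smul, sub_zero, sub_zero]
    nlinarith [norm_nonneg x]
  have hqt : 0 < ‖x - t • y‖ ^ 2 - (t - t) ^ 2 := by
    rw [sub_self, zero_pow two_ne_zero, sub_zero]
    positivity
  obtain ⟨u, hu, hqu⟩ := intermediate_value_Ioo ht.le hq ⟨hq0, hqt⟩
  refine ⟨u, hu, ?_⟩
  rw [← sq_eq_sq₀ (norm_nonneg _) (sub_pos.2 hu.2).le]
  linarith [hqu]

theorem injOn_lightConeMap : InjOn (lightConeMap t x) (lightConeDomain t x) := by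
  intro z₁ hz₁ z₂ hz₂ heq
  have hu : t - ‖z₁‖ = t - ‖z₂‖ := by
    refine eq_of_norm_sub_smul_eq (x := x) (norm_lightConeMap_lt_one hz₁)
      (sub_lt_self t (norm_pos_of_mem_lightConeDomain hz₁))
      (sub_lt_self t (norm_pos_of_mem_lightConeDomain hz₂)) ?_ ?_
    · rw [sub_smul_lightConeMap hz₁, sub_sub_cancel]
    · rw [heq, sub_smul_lightConeMap hz₂, sub_sub_cancel]
  rw [← sub_smul_lightConeMap hz₁, ← sub_smul_lightConeMap hz₂, hu, heq]

theorem lightConeMap_image (hx : ‖x‖ < t) :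
    lightConeMap t x '' lightConeDomain t x = ball 0 1 \ {t⁻¹ • x} := by
  have ht : 0 < t := (norm_nonneg x).trans_lt hx
  apply Subset.antisymm
  · rintro _ ⟨z, hz, rfl⟩
    refine ⟨mem_ball_zero_iff.2 (norm_lightConeMap_lt_one hz), fun hzx => ?_⟩
    have hz' : z = (‖z‖ / t) • x := by
      conv_lhs => rw [← sub_smul_lightConeMap hz, mem_singleton_iff.1 hzx]
      have hcoef : ‖z‖ / t = 1 - (t - ‖z‖) * t⁻¹ := by field_simp; ring
      rw [hcoef, smul_smul, sub_smul (1 : ℝ), one_smul]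
    have hnorm := congrArg norm hz'
    rw [norm_smul, Real.norm_eq_abs, abs_of_nonneg (by positivity)] at hnorm
    have hxt : ‖x‖ = t := by
      field_simp at hnorm
      nlinarith [norm_pos_of_mem_lightConeDomain hz]
    exact hx.ne hxt
  · rintro y ⟨hy, hyx⟩
    rw [mem_ball_zero_iff] at hy
    have hy' : x - t • y ≠ 0 := fun h => hyx <| by
      rw [mem_singleton_iff, sub_eq_zero.1 h, smul_smul, inv_mul_cancel₀ ht.ne', one_smul]
    obtain ⟨u, hu, hxu⟩ := exists_norm_sub_smul_eq hx hy'
    have hxz : x - (x - u • y) = u • y := sub_sub_cancel x _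
    have hnu : ‖u • y‖ = u * ‖y‖ := by rw [norm_smul, Real.norm_eq_abs, abs_of_pos hu.1]
    refine ⟨x - u • y, ⟨fun h0 => ?_, ?_⟩, ?_⟩
    · rw [h0, norm_zero] at hxu
      linarith [hu.2]
    · rw [hxz, hxu, hnu, sub_sub_cancel]
      nlinarith [hu.1]
    · rw [lightConeMap, hxu, sub_sub_cancel, hxz, smul_smul, inv_mul_cancel₀ hu.1.ne', one_smul]

def lightConeRadius (t : ℝ) (x η : V) : ℝ := (t ^ 2 - ‖x‖ ^ 2) / (2 * (t - ⟪x, η⟫))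

theorem inner_lt_of_norm_lt (hx : ‖x‖ < t) (hη : ‖η‖ = 1) : ⟪x, η⟫ < t := by
  have := real_inner_le_norm x η
  rw [hη, mul_one] at this
  linarith

theorem lightConeRadius_pos (hx : ‖x‖ < t) (hη : ‖η‖ = 1) : 0 < lightConeRadius t x η :=
  div_pos (by nlinarith [norm_nonneg x]) (by linarith [inner_lt_of_norm_lt hx hη])

theorem lightConeRadius_lt (hx : ‖x‖ < t) (hη : ‖η‖ = 1) : lightConeRadius t x η < t := by
  have hxη := real_inner_le_norm x η
  rw [hη, mul_one] at hxη
  rw [lightConeRadius, div_lt_iff₀ (by linarith [inner_lt_of_norm_lt hx hη])]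
  nlinarith [norm_nonneg x]

theorem smul_mem_lightConeDomain_iff (hx : ‖x‖ < t) (hη : ‖η‖ = 1) (hr : 0 < r) :
    r • η ∈ lightConeDomain t x ↔ r < lightConeRadius t x η := by
  have hnorm : ‖r • η‖ = r := by rw [norm_smul, hη, mul_one, Real.norm_eq_abs, abs_of_pos hr]
  have hpos : 0 < t - ⟪x, η⟫ := sub_pos.2 (inner_lt_of_norm_lt hx hη)
  have hq : ‖x - r • η‖ ^ 2 - (t - r) ^ 2 = 2 * (t - ⟪x, η⟫) * (r - lightConeRadius t x η) := by
    rw [norm_sub_smul_sq_sub_sq, hη, lightConeRadius]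
    field_simp [hpos.ne']
    ring
  have hne : r • η ≠ 0 := fun h => by simp [h] at hnorm; linarith
  change r • η ≠ 0 ∧ ‖x - r • η‖ < t - ‖r • η‖ ↔ _
  rw [hnorm, and_iff_right hne]
  constructor
  · intro h
    have := pow_lt_pow_left₀ h (norm_nonneg _) two_ne_zero
    nlinarith
  · intro h
    have htr : 0 ≤ t - r := by linarith [lightConeRadius_lt hx hη]
    refine lt_of_pow_lt_pow_left₀ 2 htr ?_
    nlinarith

theorem integral_Ioi_smul_indicator_lightConeDomain [MeasurableSpace V] [BorelSpace V]
    {F : Type*} [NormedAddCommGroup F] [NormedSpace ℝ F] (hx : ‖x‖ < t) (hη : ‖η‖ = 1)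
    (w : ℝ → ℝ) (g : V → F) :
    ∫ r in Ioi 0, w r • (lightConeDomain t x).indicator g (r • η) =
      ∫ r in Ioo 0 (lightConeRadius t x η), w r • g (r • η) := by
  have hslice : Ioi 0 ∩ (fun r : ℝ => r • η) ⁻¹' lightConeDomain t x =
      Ioo 0 (lightConeRadius t x η) := by
    ext r
    simp only [mem_inter_iff, mem_Ioi, mem_preimage, mem_Ioo]
    exact ⟨fun h => ⟨h.1, (smul_mem_lightConeDomain_iff hx hη h.1).1 h.2⟩,
      fun h => ⟨h.1, (smul_mem_lightConeDomain_iff hx hη h.1).2 h.2⟩⟩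
  have hmeas : MeasurableSet ((fun r : ℝ => r • η) ⁻¹' lightConeDomain t x) :=
    isOpen_lightConeDomain.measurableSet.preimage (measurable_id.smul_const η)
  rw [← hslice, ← setIntegral_indicator hmeas]
  refine setIntegral_congr_fun measurableSet_Ioi fun r _ => ?_
  by_cases h : r • η ∈ lightConeDomain t x <;> simp [h]

end InnerProductSpace

theorem det_smul_id_add_smul_smulRight (a k : ℝ) (v u : E3) :
    (a • ContinuousLinearMap.id ℝ E3 + k • (innerSL ℝ v).smulRight u).det =
      a ^ 2 * (a + k * ⟪v, u⟫) := by
  rw [ContinuousLinearMap.det, ← LinearMap.det_toMatrix (PiLp.basisFun 2 ℝ (Fin 3)),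
    Matrix.det_fin_three]
  simp [LinearMap.toMatrix_apply, PiLp.inner_apply, Fin.sum_univ_three]
  ring

theorem abs_det_lightConeMapDeriv {t : ℝ} {x z : E3} (hz : z ∈ lightConeDomain t x) :
    |(lightConeMapDeriv t x z).det| = (t * ‖z‖ - ⟪x, z⟫) / (‖z‖ * (t - ‖z‖) ^ 4) := by
  have hz₀ := norm_pos_of_mem_lightConeDomain hz
  have hu : 0 < t - ‖z‖ := sub_pos.2 (norm_lt_of_mem_lightConeDomain hz)
  have hdet : (lightConeMapDeriv t x z).det = -((t * ‖z‖ - ⟪x, z⟫) / (‖z‖ * (t - ‖z‖) ^ 4)) := by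
    rw [lightConeMapDeriv, det_smul_id_add_smul_smulRight, inner_sub_right, real_inner_comm,
      real_inner_self_eq_norm_sq]
    field_simp
    ring
  have hxz : ⟪x, z⟫ < t * ‖z‖ := by
    nlinarith [real_inner_le_norm x z, norm_sub_norm_le x z, hz.2]
  rw [hdet, abs_neg, abs_of_pos (div_pos (by linarith) (by positivity))]

theorem integral_Ioi_sq_smul_indicator_lightConeDomain {t : ℝ} {x η : E3} (hx : ‖x‖ < t)
    (hη : ‖η‖ = 1) (P : E3 → ℝ) :
    ∫ r in Ioi (0 : ℝ), r ^ 2 • (lightConeDomain t x).indicator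
        (fun z => |(lightConeMapDeriv t x z).det| • P (lightConeMap t x z)) (r • η) =
      ∫ R in (0 : ℝ)..lightConeRadius t x η,
        P ((t - R)⁻¹ • (x - R • η)) * (R ^ 2 * (t - ⟪x, η⟫) / (R - t) ^ 4) := by
  rw [integral_Ioi_smul_indicator_lightConeDomain hx hη,
    intervalIntegral.integral_of_le (lightConeRadius_pos hx hη).le, integral_Ioc_eq_integral_Ioo]
  refine setIntegral_congr_fun measurableSet_Ioo fun r hr => ?_
  have hnorm : ‖r • η‖ = r := by rw [norm_smul, hη, mul_one, Real.norm_eq_abs, abs_of_pos hr.1]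
  have htr : t - r ≠ 0 := (sub_pos.2 ((lightConeRadius_lt hx hη).trans' hr.2)).ne'
  simp only [abs_det_lightConeMapDeriv ((smul_mem_lightConeDomain_iff hx hη hr.1).2 hr.2),
    lightConeMap, hnorm, real_inner_smul_right, smul_eq_mul]
  rw [show (r - t) ^ 4 = (t - r) ^ 4 by ring]
  field_simp

theorem ball_cone_change_of_variables_general
    (t : ℝ) (x : E3) (hx : ‖x‖ < t)
    (P : E3 → ℝ) (hP : Continuous P) :
    ∫ y in closedBall (0 : E3) 1, P y =
      ∫ η : sphere (0 : E3) 1,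
        (∫ R in (0 : ℝ)..((t ^ 2 - ‖x‖ ^ 2) / (2 * (t - inner ℝ x (η : E3)))),
          P ((t - R)⁻¹ • (x - R • (η : E3))) *
            (R ^ 2 * (t - inner ℝ x (η : E3)) / (R - t) ^ 4)) ∂sphMeas := by
  set D := lightConeDomain t x
  set G : E3 → ℝ := fun z => |(lightConeMapDeriv t x z).det| • P (lightConeMap t x z)
  have hD : MeasurableSet D := isOpen_lightConeDomain.measurableSet
  have hderiv : ∀ z ∈ D, HasFDerivWithinAt (lightConeMap t x) (lightConeMapDeriv t x z) D z :=
    fun z hz =>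
      (hasFDerivAt_lightConeMap hz.1 (norm_lt_of_mem_lightConeDomain hz).ne).hasFDerivWithinAt
  have hG : IntegrableOn G D := by
    rw [← integrableOn_image_iff_integrableOn_abs_det_fderiv_smul volume hD hderiv
      injOn_lightConeMap, lightConeMap_image hx]
    exact (hP.continuousOn.integrableOn_compact (isCompact_closedBall 0 1)).mono_set
      (sdiff_subset.trans ball_subset_closedBall)
  calc ∫ y in closedBall (0 : E3) 1, P y = ∫ z in D, G z := by
        rw [setIntegral_congr_set (lightConeMap_image hx ▸
            closedBall_ae_eq_ball_sdiff_singleton volume 0 1 (t⁻¹ • x)),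
          integral_image_eq_integral_abs_det_fderiv_smul volume hD hderiv injOn_lightConeMap]
    _ = ∫ η : sphere (0 : E3) 1,
          (∫ r in Ioi (0 : ℝ), r ^ 2 • D.indicator G (r • (η : E3))) ∂sphMeas := by
        rw [← integral_indicator hD, integral_eq_integral_toSphere_integral_Ioi volume
          ((integrable_indicator_iff hD).2 hG), finrank_euclideanSpace_fin]
        rfl
    _ = _ := integral_congr_ae (.of_forall fun η =>
        integral_Ioi_sq_smul_indicator_lightConeDomain hx (mem_sphere_zero_iff_norm.1 η.2) P)

/-- change of variables between the unit ball and the backward light cone: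
for `0 ≤ |x| < t` and continuous `P` vanishing outside the closed unit ball,
`∫_{|y|≤1} P(y) dy = ∫_{S²} ∫_0^{R(η)} P((x−Rη)/(t−R))·R²(t−⟨x,η⟩)/(R−t)⁴ dR dσ(η)`
where `R(η) = (t²−|x|²)/(2(t−⟨x,η⟩))`. -/
theorem ball_cone_change_of_variables
    (t : ℝ) (x : E3) (ht : 0 < t) (hx : ‖x‖ < t)
    (P : E3 → ℝ) (hP : Continuous P) (hsupp : ∀ y : E3, 1 < ‖y‖ → P y = 0) :
    ∫ y in closedBall (0 : E3) 1, P y =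
      ∫ η : sphere (0 : E3) 1,
        (∫ R in (0 : ℝ)..((t ^ 2 - ‖x‖ ^ 2) / (2 * (t - inner ℝ x (η : E3)))),
          P ((t - R)⁻¹ • (x - R • (η : E3))) *
            (R ^ 2 * (t - inner ℝ x (η : E3)) / (R - t) ^ 4)) ∂sphMeas :=
  ball_cone_change_of_variables_general t x hx P hP
end
end

section
/- (Jacobian of the cone parametrization.) Fix t > 0 and r ≥ 0. Define the map Φ : {(R,η₂,η₃) ∈ ℝ³ : η₂² + η₃² < 1, 0 < R < t} → ℝ³ by Φ(R,η₂,η₃) = ( (r − R·√(1−η₂²−η₃²))/(t − R), −R·η₂/(t − R), −R·η₃/(t − R) ). Then Φ is differentiable and its Jacobian determinant equals det DΦ(R,η₂,η₃) = R²·( r·√(1−η₂²−η₃²) − t )/( (R − t)⁴·√(1−η₂²−η₃²) ). -/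
/-!
Writing `η = (s, η₂, η₃)` with `s = √(1 − η₂² − η₃²)`, so that `Φ = (x − Rη)/(t − R)`, the columns
of `DΦ` are `∂_R Φ = (x − tη)/(t − R)²` and `∂_{η_j} Φ = −R/(t − R) · ∂_{η_j} η` for `j = 2, 3`.
Since `∂_{η₂} η × ∂_{η₃} η = η / s`, the determinant is
`R²/(t − R)⁴ · ⟨x − tη, η⟩ / s = R² (r s − t)/((t − R)⁴ s)`, using `|η| = 1`.
-/

noncomputable section

/-- The cone parametrization `Φ(R,η₂,η₃) = (x − Rη)/(t − R)` with `x = (r,0,0)` and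
`η = (√(1−η₂²−η₃²), η₂, η₃)`. -/
def Phi (t r : ℝ) (p : Fin 3 → ℝ) : Fin 3 → ℝ :=
  ![(r - p 0 * Real.sqrt (1 - (p 1) ^ 2 - (p 2) ^ 2)) / (t - p 0),
    -(p 0 * p 1) / (t - p 0),
    -(p 0 * p 2) / (t - p 0)]

section

variable {𝕜 E : Type*} [NontriviallyNormedField 𝕜] [NormedAddCommGroup E] [NormedSpace 𝕜 E]
  {f g : E → 𝕜} {f' g' : E →L[𝕜] 𝕜} {x : E}

theorem HasFDerivAt.fun_div (hf : HasFDerivAt f f' x) (hg : HasFDerivAt g g' x) (hx : g x ≠ 0) :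
    HasFDerivAt (fun y => f y / g y) ((g x ^ 2)⁻¹ • (g x • f' - f x • g')) x := by
  simp only [div_eq_mul_inv]
  refine (hf.mul ((hasDerivAt_inv hx).comp_hasFDerivAt x hg)).congr_fderiv ?_
  ext v
  simp only [Function.comp_apply, add_apply, smul_apply, sub_apply, smul_eq_mul]
  field_simp
  ring

end

namespace Phi

variable (t r : ℝ) (p : Fin 3 → ℝ)

def jacobian : Matrix (Fin 3) (Fin 3) ℝ :=
  let R := p 0
  let s := √(1 - p 1 ^ 2 - p 2 ^ 2)
  !![(r - t * s) / (t - R) ^ 2, R * p 1 / ((t - R) * s), R * p 2 / ((t - R) * s);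
     -(t * p 1) / (t - R) ^ 2, -R / (t - R), 0;
     -(t * p 2) / (t - R) ^ 2, 0, -R / (t - R)]

variable {t r p}

theorem hasFDerivAt (hη : 0 < 1 - p 1 ^ 2 - p 2 ^ 2) (hRt : p 0 ≠ t) :
    HasFDerivAt (Phi t r) (Matrix.toLin' (jacobian t r p)).toContinuousLinearMap p := by
  have hs : √(1 - p 1 ^ 2 - p 2 ^ 2) ≠ 0 := (Real.sqrt_pos.2 hη).ne'
  have ht : t - p 0 ≠ 0 := sub_ne_zero.2 hRt.symm
  have hcoord (i : Fin 3) := hasFDerivAt_apply (𝕜 := ℝ) i p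
  have hden := (hcoord 0).const_sub t
  have hsqrt := (((hcoord 1).pow 2).const_sub 1 |>.sub ((hcoord 2).pow 2)).sqrt hη.ne'
  have h₀ := ((hcoord 0).mul hsqrt).const_sub r |>.fun_div hden ht
  have h₁ := ((hcoord 0).mul (hcoord 1)).neg.fun_div hden ht
  have h₂ := ((hcoord 0).mul (hcoord 2)).neg.fun_div hden ht
  refine hasFDerivAt_pi'' fun i => ?_
  fin_cases i <;> [apply h₀.congr_fderiv; apply h₁.congr_fderiv; apply h₂.congr_fderiv] <;>
  · ext v
    simp only [jacobian, ContinuousLinearMap.comp_apply, LinearMap.coe_toContinuousLinearMap',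
      Matrix.toLin'_apply, Matrix.cons_mulVec, Matrix.empty_mulVec, dotProduct, Fin.sum_univ_three,
      Matrix.cons_val, Matrix.cons_val_zero, Matrix.cons_val_one, Fin.zero_eta, Fin.mk_one,
      Fin.reduceFinMk, Pi.mul_apply, Pi.sub_apply, Pi.neg_apply, add_apply, sub_apply, smul_apply,
      neg_apply, ContinuousLinearMap.proj_apply, smul_eq_mul, nsmul_eq_mul]
    field_simp
    ring

theorem det_jacobian (hη : 0 < 1 - p 1 ^ 2 - p 2 ^ 2) (hRt : p 0 ≠ t) :
    (jacobian t r p).det = p 0 ^ 2 * (r * √(1 - p 1 ^ 2 - p 2 ^ 2) - t) /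
      ((p 0 - t) ^ 4 * √(1 - p 1 ^ 2 - p 2 ^ 2)) := by
  have hs : √(1 - p 1 ^ 2 - p 2 ^ 2) ≠ 0 := (Real.sqrt_pos.2 hη).ne'
  have ht : t - p 0 ≠ 0 := sub_ne_zero.2 hRt.symm
  rw [Matrix.det_fin_three]
  simp only [jacobian, Matrix.of_apply, Matrix.cons_val', Matrix.cons_val_zero,
    Matrix.cons_val_fin_one, Matrix.cons_val_one, Matrix.cons_val, mul_zero, sub_zero, zero_mul,
    add_zero]
  field_simp
  linear_combination -(p 0 ^ 2 * t * (t - p 0) ^ 4) * Real.sq_sqrt hη.le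

end Phi

theorem cone_jacobian_general (t r : ℝ)
    (p : Fin 3 → ℝ) (hη : (p 1) ^ 2 + (p 2) ^ 2 < 1) (hRt : p 0 < t) :
    DifferentiableAt ℝ (Phi t r) p ∧
      LinearMap.det ((fderiv ℝ (Phi t r) p : (Fin 3 → ℝ) →L[ℝ] (Fin 3 → ℝ)) :
          (Fin 3 → ℝ) →ₗ[ℝ] (Fin 3 → ℝ)) =
        (p 0) ^ 2 * (r * Real.sqrt (1 - (p 1) ^ 2 - (p 2) ^ 2) - t) /
          ((p 0 - t) ^ 4 * Real.sqrt (1 - (p 1) ^ 2 - (p 2) ^ 2)) := by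
  have hη' : 0 < 1 - p 1 ^ 2 - p 2 ^ 2 := by linarith
  have hΦ := Phi.hasFDerivAt (r := r) hη' hRt.ne
  refine ⟨hΦ.differentiableAt, ?_⟩
  rw [hΦ.fderiv, LinearMap.coe_toContinuousLinearMap, LinearMap.det_toLin',
    Phi.det_jacobian hη' hRt.ne]

/-- Jacobian of the cone parametrization: on
`{(R,η₂,η₃) : η₂²+η₃² < 1, 0 < R < t}`, `Φ` is differentiable with Jacobian determinant
`R²(r√(1−η₂²−η₃²) − t)/((R−t)⁴√(1−η₂²−η₃²))`. -/
theorem cone_jacobian (t r : ℝ) (ht : 0 < t) (hr : 0 ≤ r)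
    (p : Fin 3 → ℝ) (hη : (p 1) ^ 2 + (p 2) ^ 2 < 1) (hR0 : 0 < p 0) (hRt : p 0 < t) :
    DifferentiableAt ℝ (Phi t r) p ∧
      LinearMap.det ((fderiv ℝ (Phi t r) p : (Fin 3 → ℝ) →L[ℝ] (Fin 3 → ℝ)) :
          (Fin 3 → ℝ) →ₗ[ℝ] (Fin 3 → ℝ)) =
        (p 0) ^ 2 * (r * Real.sqrt (1 - (p 1) ^ 2 - (p 2) ^ 2) - t) /
          ((p 0 - t) ^ 4 * Real.sqrt (1 - (p 1) ^ 2 - (p 2) ^ 2)) :=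
  cone_jacobian_general t r p hη hRt
end
end
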